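/- The F-span of the dn+1 elements ∏_{j=1}^n x_j together with x_k^a·y_k·∏_{j=k+1}^n x_j for 1 ≤ k ≤ n and 0 ≤ a ≤ d−1 is a Kummer space of degree d and has F-dimension exactly dn+1. -/

import Mathlib

/-- A fixed presentation of a tensor product of `n` cyclic algebras of degree `d`
over `F`: generators `x k`, `y k` with `(x k)^d = αₖ·1`, `(y k)^d = βₖ·1`,
`x k · y k = ρ · (y k · x k)`, generators with different indices commuting, and the
`x k, y k` generating `A` as an `F`-algebra. -/
structure TensorCyclicPresD (F A : Type*) [Field F] [Ring A] [Algebra F A]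
    (ρ : F) (d n : ℕ) where
  x : Fin n → A
  y : Fin n → A
  α : Fin n → F
  β : Fin n → F
  α_ne_zero : ∀ k, α k ≠ 0
  β_ne_zero : ∀ k, β k ≠ 0
  x_pow : ∀ k, x k ^ d = algebraMap F A (α k)
  y_pow : ∀ k, y k ^ d = algebraMap F A (β k)
  xy_rel : ∀ k, x k * y k = ρ • (y k * x k)
  xx_comm : ∀ k l, k ≠ l → Commute (x k) (x l)
  yy_comm : ∀ k l, k ≠ l → Commute (y k) (y l)
  xy_comm : ∀ k l, k ≠ l → Commute (x k) (y l)
  generates : Algebra.adjoin F (Set.range x ∪ Set.range y) = ⊤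


/-!
Write `T m = x m * ⋯ * x (n-1)`. A vector of the span has the form
`c • T 0 + ∑ k, p k (x k) * y k * T (k+1)`, and these `n + 1` summands pairwise `ρ`-commute in
this order (`u * v = ρ • (v * u)`). When `a * b = ρ • (b * a)` for a primitive `d`-th root of
unity `ρ`, `(a + b) ^ d = a ^ d + b ^ d`; so the `d`-th power of the vector is the sum of the
`d`-th powers of the summands. Each of these is scalar: `T m ^ d` is a product of the `x j ^ d`,
and `(p (x) * y) ^ d = (∏ j < d, p (ρ⁻ʲ X)) (x) * y ^ d`, where the product is invariant under
`X ↦ ρ X`, hence a polynomial in `x ^ d`.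

For the dimension, each spanning vector is a common eigenvector of the conjugations by the `x j`
and the `y j`, and any two of them are told apart by one of these conjugations.
-/

open Polynomial Finset

def QCommute {R A : Type*} [CommSemiring R] [Semiring A] [Algebra R A] (c : R) (u v : A) :
    Prop :=
  u * v = c • (v * u)

namespace QCommute

section Semiring
variable {R A : Type*} [CommSemiring R] [Semiring A] [Algebra R A] {c c' : R} {u v w : A}

theorem of_commute (h : Commute u v) : QCommute (1 : R) u v := by
  rw [QCommute, one_smul, h.eq]

theorem commute (h : QCommute (1 : R) u v) : Commute u v := by
  rw [QCommute, one_smul] at h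
  exact h

theorem mul_left (h₁ : QCommute c u w) (h₂ : QCommute c' v w) :
    QCommute (c * c') (u * v) w := by
  unfold QCommute at *
  rw [mul_assoc, h₂, mul_smul_comm, ← mul_assoc, h₁, smul_mul_assoc, smul_smul, mul_assoc,
    mul_comm c']

theorem mul_right (h₁ : QCommute c u v) (h₂ : QCommute c' u w) :
    QCommute (c * c') u (v * w) := by
  unfold QCommute at *
  rw [← mul_assoc, h₁, smul_mul_assoc, mul_assoc, h₂, mul_smul_comm, smul_smul, ← mul_assoc]

theorem pow_left (h : QCommute c u v) (m : ℕ) : QCommute (c ^ m) (u ^ m) v := by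
  induction m with
  | zero => simpa using of_commute (Commute.one_left v)
  | succ m ih => rw [pow_succ, pow_succ]; exact ih.mul_left h

theorem pow_right (h : QCommute c u v) (m : ℕ) : QCommute (c ^ m) u (v ^ m) := by
  induction m with
  | zero => simpa using of_commute (Commute.one_right u)
  | succ m ih => rw [pow_succ, pow_succ]; exact ih.mul_right h

theorem smul_left (h : QCommute c u v) (t : R) : QCommute c (t • u) v := by
  unfold QCommute at *
  rw [smul_mul_assoc, h, mul_smul_comm, smul_comm]

theorem list_sum_right {l : List A} (h : ∀ v ∈ l, QCommute c u v) : QCommute c u l.sum := by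
  induction l with
  | nil => simp [QCommute]
  | cons v l ih =>
    simp only [List.forall_mem_cons] at h
    rw [QCommute, List.sum_cons, mul_add, h.1, ih h.2, add_mul, smul_add]

end Semiring

theorem inv {K A : Type*} [Field K] [Ring A] [Algebra K A] {c : K} {u v : A}
    (h : QCommute c u v) (hc : c ≠ 0) : QCommute c⁻¹ v u := by
  rw [QCommute, h, smul_smul, inv_mul_cancel₀ hc, one_smul]

theorem mulLeftRight_apply_inv {K A : Type*} [Field K] [DivisionRing A] [Algebra K A] {c : K}
    {g u : A} (h : QCommute c g u) (hg : g ≠ 0) :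
    LinearMap.mulLeftRight K (g, g⁻¹) u = c • u := by
  rw [LinearMap.mulLeftRight_apply, h, smul_mul_assoc, mul_assoc, mul_inv_cancel₀ hg, mul_one]

theorem inv_mulLeftRight_apply {K A : Type*} [Field K] [DivisionRing A] [Algebra K A] {c : K}
    {g u : A} (h : QCommute c u g) (hg : g ≠ 0) :
    LinearMap.mulLeftRight K (g⁻¹, g) u = c • u := by
  rw [LinearMap.mulLeftRight_apply, mul_assoc, h, mul_smul_comm, ← mul_assoc,
    inv_mul_cancel₀ hg, one_mul]

end QCommute

namespace Polynomial

variable {R : Type*} [CommSemiring R]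

noncomputable def rescale (a : R) : R[X] →ₐ[R] R[X] := aeval (C a * X)

theorem coeff_rescale (a : R) (p : R[X]) (m : ℕ) : (rescale a p).coeff m = a ^ m * p.coeff m := by
  induction p using Polynomial.induction_on' with
  | add p q hp hq => simp only [map_add, coeff_add, hp, hq, mul_add]
  | monomial k t =>
    rw [rescale, aeval_monomial, algebraMap_eq, mul_pow, ← C_pow, ← mul_assoc, ← C_mul,
      C_mul_X_pow_eq_monomial, coeff_monomial, coeff_monomial]
    split_ifs with h
    · subst h; ring
    · simp

theorem rescale_monomial (a t : R) (k : ℕ) :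
    rescale a (monomial k t) = monomial k (a ^ k * t) := by
  ext m; simp only [coeff_rescale, coeff_monomial]; split_ifs with h <;> simp [h]

theorem rescale_rescale (a b : R) (p : R[X]) : rescale a (rescale b p) = rescale (a * b) p := by
  ext m; simp only [coeff_rescale, mul_pow, mul_assoc]

theorem rescale_one (p : R[X]) : rescale 1 p = p := by
  ext m; simp [coeff_rescale]

theorem natDegree_rescale_le (a : R) (p : R[X]) : (rescale a p).natDegree ≤ p.natDegree :=
  natDegree_le_iff_coeff_eq_zero.2 fun m hm => by
    rw [coeff_rescale, coeff_eq_zero_of_natDegree_lt hm, mul_zero]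

theorem coeff_prod_rescale_eq_zero {K : Type*} [CommRing K] [IsDomain K] {c : K} {d : ℕ}
    (hc : IsPrimitiveRoot c d) (p : K[X]) {m : ℕ} (hm : ¬ d ∣ m) :
    (∏ j ∈ range d, rescale (c ^ j) p).coeff m = 0 := by
  rcases eq_or_ne p 0 with rfl | hp
  · rcases d.eq_zero_or_pos with rfl | hd
    · simp only [zero_dvd_iff] at hm
      simp [coeff_one, hm]
    · simp [prod_eq_zero (mem_range.2 hd)]
  set G := ∏ j ∈ range d, rescale (c ^ j) p
  -- the factors are permuted cyclically by `X ↦ cX`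
  have hG : rescale c G = G := by
    have hshift : rescale c G * p = G * p := by
      calc rescale c G * p = (∏ j ∈ range d, rescale (c ^ (j + 1)) p) * rescale (c ^ 0) p := by
            simp only [G, map_prod, rescale_rescale, pow_succ', pow_zero, rescale_one]
        _ = G * rescale (c ^ d) p := by
            rw [← prod_range_succ' (fun j => rescale (c ^ j) p), prod_range_succ]
        _ = G * p := by rw [hc.pow_eq_one, rescale_one]
    exact mul_right_cancel₀ hp hshift
  have hcoeff : (c ^ m - 1) * G.coeff m = 0 := by
    rw [sub_mul, ← coeff_rescale, hG, one_mul, sub_self]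
  exact (mul_eq_zero.1 hcoeff).resolve_left fun h =>
    hm ((hc.pow_eq_one_iff_dvd m).1 (sub_eq_zero.1 h))

theorem prod_rescale_one_add_X {K : Type*} [CommRing K] [IsDomain K] {c : K} {d : ℕ}
    (hc : IsPrimitiveRoot c d) (hd : 0 < d) :
    ∏ j ∈ range d, rescale (c ^ j) (1 + X) =
      1 + ∏ j ∈ range d, rescale (c ^ j) (X : K[X]) := by
  have hdeg : ∀ p : K[X], p.natDegree ≤ 1 →
      ∀ j ∈ range d, (rescale (c ^ j) p).natDegree ≤ 1 :=
    fun p hp j _ => (natDegree_rescale_le _ p).trans hp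
  have hlin₁ : ((1 : K[X]) + X).natDegree ≤ 1 := (natDegree_add_le _ _).trans (by simp)
  -- both sides live in degrees `0` and `d` only, where the coefficients are read off directly
  ext m
  rcases Nat.eq_zero_or_pos m with rfl | hm0
  · simp [coeff_zero_prod, coeff_rescale, prod_eq_zero (mem_range.2 hd)]
  rw [coeff_add, coeff_one, if_neg hm0.ne', zero_add]
  rcases lt_trichotomy m d with hmd | rfl | hmd
  · have hndvd : ¬ d ∣ m := fun h => absurd (Nat.le_of_dvd hm0 h) (not_le.2 hmd)
    rw [coeff_prod_rescale_eq_zero hc _ hndvd, coeff_prod_rescale_eq_zero hc _ hndvd]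
  · have h₁ := coeff_prod_of_natDegree_le _ (fun j => rescale (c ^ j) (1 + X)) 1 (hdeg _ hlin₁)
    have h₂ := coeff_prod_of_natDegree_le _ (fun j => rescale (c ^ j) X) 1 (hdeg X natDegree_X_le)
    simp only [card_range, mul_one] at h₁ h₂
    rw [h₁, h₂]
    simp [coeff_rescale, coeff_one]
  · have hle : ∀ p : K[X], p.natDegree ≤ 1 →
        (∏ j ∈ range d, rescale (c ^ j) p).natDegree < m := fun p hp =>
      (natDegree_prod_le _ _).trans_lt <| (sum_le_card_nsmul _ _ 1 (hdeg p hp)).trans_lt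
        (by simpa using hmd)
    rw [coeff_eq_zero_of_natDegree_lt (hle _ hlin₁),
      coeff_eq_zero_of_natDegree_lt (hle X natDegree_X_le)]

theorem aeval_mem_of_coeff_eq_zero {A : Type*} [Semiring A] [Algebra R A] {S : Subalgebra R A}
    {x : A} {d : ℕ} (hx : x ^ d ∈ S) {G : R[X]}
    (hG : ∀ m, ¬ d ∣ m → G.coeff m = 0) : aeval x G ∈ S := by
  rw [aeval_eq_sum_range]
  refine S.sum_mem fun m _ => ?_
  by_cases hm : d ∣ m
  · obtain ⟨k, rfl⟩ := hm
    rw [pow_mul]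
    exact S.smul_mem (pow_mem hx k) _
  · rw [hG m hm, zero_smul]
    exact S.zero_mem

end Polynomial

namespace QCommute

section Semiring
variable {R A : Type*} [CommSemiring R] [Semiring A] [Algebra R A] {c : R} {x y : A}

theorem mul_aeval (h : QCommute c y x) (p : R[X]) :
    y * aeval x p = aeval x (rescale c p) * y := by
  induction p using Polynomial.induction_on' with
  | add p q hp hq => rw [map_add, map_add, map_add, mul_add, add_mul, hp, hq]
  | monomial k t =>
    have hk : y * x ^ k = c ^ k • (x ^ k * y) := h.pow_right k
    rw [rescale_monomial, aeval_monomial, aeval_monomial, ← Algebra.smul_def,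
      ← Algebra.smul_def, mul_smul_comm, hk, smul_smul, smul_mul_assoc, mul_comm t]

theorem aeval_mul_pow (h : QCommute c y x) (p : R[X]) (m : ℕ) :
    (aeval x p * y) ^ m = aeval x (∏ j ∈ range m, rescale (c ^ j) p) * y ^ m := by
  induction m with
  | zero => simp
  | succ m ih =>
    calc (aeval x p * y) ^ (m + 1)
        = aeval x (∏ j ∈ range m, rescale (c ^ j) p) * (y ^ m * aeval x p) * y := by
          rw [pow_succ, ih]; simp only [mul_assoc]
      _ = aeval x (∏ j ∈ range (m + 1), rescale (c ^ j) p) * y ^ (m + 1) := by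
          rw [(h.pow_left m).mul_aeval, prod_range_succ, map_mul, pow_succ]
          simp only [mul_assoc]

theorem _root_.Commute.aeval_right {z : A} (h : Commute z x) (p : R[X]) :
    Commute z (aeval x p) := by
  have h' := (of_commute (R := R) h).mul_aeval p
  rwa [rescale_one] at h'

end Semiring

theorem aeval_mul_pow_mem {K A : Type*} [CommRing K] [IsDomain K] [Semiring A]
    [Algebra K A] {S : Subalgebra K A} {c : K} {d : ℕ} {x y : A} (h : QCommute c y x)
    (hc : IsPrimitiveRoot c d) (hx : x ^ d ∈ S) (hy : y ^ d ∈ S) (p : K[X]) :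
    (aeval x p * y) ^ d ∈ S := by
  rw [h.aeval_mul_pow]
  exact mul_mem (aeval_mem_of_coeff_eq_zero hx fun m hm => coeff_prod_rescale_eq_zero hc p hm) hy

theorem add_pow {K A : Type*} [CommRing K] [IsDomain K] [DivisionRing A] [Algebra K A]
    {ρ : K} {d : ℕ} {a b : A} (h : QCommute ρ a b) (hρ : IsPrimitiveRoot ρ d) (hd : 0 < d) :
    (a + b) ^ d = a ^ d + b ^ d := by
  rcases eq_or_ne a 0 with rfl | ha
  · simp [zero_pow hd.ne']
  set u := b * a⁻¹
  have hb : aeval u (X : K[X]) * a = b := by simp [u, mul_assoc, inv_mul_cancel₀ ha]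
  have hu : QCommute ρ a u := by
    rw [QCommute, ← mul_assoc, h, smul_mul_assoc, mul_assoc, mul_inv_cancel₀ ha, mul_one,
      ← hb, aeval_X]
  calc (a + b) ^ d = (aeval u (1 + X : K[X]) * a) ^ d := by
        rw [map_add, map_one, add_mul, one_mul, hb]
    _ = a ^ d + (aeval u (X : K[X]) * a) ^ d := by
      rw [hu.aeval_mul_pow, hu.aeval_mul_pow, prod_rescale_one_add_X hρ hd, map_add, map_one,
        add_mul, one_mul]
    _ = a ^ d + b ^ d := by rw [hb]

theorem list_sum_pow {K A : Type*} [CommRing K] [IsDomain K] [DivisionRing A]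
    [Algebra K A] {ρ : K} {d : ℕ} (hρ : IsPrimitiveRoot ρ d) (hd : 0 < d) {l : List A}
    (hl : l.Pairwise (QCommute ρ)) : l.sum ^ d = (l.map (· ^ d)).sum := by
  induction l with
  | nil => simp [zero_pow hd.ne']
  | cons a l ih =>
    rw [List.pairwise_cons] at hl
    rw [List.sum_cons, (list_sum_right hl.1).add_pow hρ hd, ih hl.2, List.map_cons,
      List.sum_cons]

end QCommute

theorem linearIndependent_of_separating_eigenvalues {K M ι : Type*} [Field K] [AddCommGroup M]
    [Module K M] (v : ι → M) (hv : ∀ i, v i ≠ 0)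
    (hsep : ∀ i i', i ≠ i' → ∃ (f : Module.End K M) (μ : ι → K),
      (∀ j, f (v j) = μ j • v j) ∧ μ i ≠ μ i') :
    LinearIndependent K v := by
  classical
  rw [linearIndependent_iff']
  intro s
  induction s using Finset.strongInduction with
  | H s ih =>
  intro g hg i hi
  by_contra hgi
  obtain ⟨i', hi', hne⟩ : ∃ i' ∈ s, i' ≠ i := by
    by_contra! hall
    rw [sum_eq_single_of_mem i hi fun j hj hji => absurd (hall j hj) hji] at hg
    exact hgi ((smul_eq_zero.1 hg).resolve_right (hv i))
  obtain ⟨f, μ, hf, hμ⟩ := hsep i i' hne.symm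
  -- applying `f - μ i'` to the relation kills the `i'`-term and keeps the `i`-term
  have hg' : ∑ j ∈ s.erase i', (g j * (μ j - μ i')) • v j = 0 := by
    rw [sum_erase _ (by simp)]
    calc ∑ j ∈ s, (g j * (μ j - μ i')) • v j
        = f (∑ j ∈ s, g j • v j) - μ i' • ∑ j ∈ s, g j • v j := by
          simp only [map_sum, map_smul, hf, smul_sum, ← sum_sub_distrib, smul_smul]
          exact sum_congr rfl fun j _ => by rw [mul_sub, sub_smul, mul_comm (μ i')]
      _ = 0 := by rw [hg, map_zero, smul_zero, sub_zero]
  exact mul_ne_zero hgi (sub_ne_zero.2 hμ) (ih _ (erase_ssubset hi') _ hg' i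
    (mem_erase.2 ⟨hne.symm, hi⟩))

namespace TensorCyclicPresD

variable {F A : Type*} [Field F] [DivisionRing A] [Algebra F A] {ρ : F} {d n : ℕ}
  (P : TensorCyclicPresD F A ρ d n)

def tailProd (m : ℕ) : A := (((List.finRange n).map P.x).drop m).prod

theorem tailProd_of_le {m : ℕ} (hm : n ≤ m) : P.tailProd m = 1 := by
  rw [tailProd, List.drop_of_length_le (by simpa using hm), List.prod_nil]

theorem tailProd_of_lt {m : ℕ} (hm : m < n) :
    P.tailProd m = P.x ⟨m, hm⟩ * P.tailProd (m + 1) := by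
  rw [tailProd, List.drop_eq_getElem_cons (by simpa using hm)]
  simp [tailProd]

theorem tailProd_induction {Q : ℕ → A → Prop} (one : ∀ m, n ≤ m → Q m 1)
    (mul : ∀ m (hm : m < n), Q (m + 1) (P.tailProd (m + 1)) →
      Q m (P.x ⟨m, hm⟩ * P.tailProd (m + 1)))
    (m : ℕ) : Q m (P.tailProd m) := by
  induction hk : n - m generalizing m with
  | zero => rw [P.tailProd_of_le (by omega)]; exact one m (by omega)
  | succ k ih =>
    have hm : m < n := by omega
    rw [P.tailProd_of_lt hm]
    exact mul m hm (ih (m + 1) (by omega))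

theorem commute_x (j k : Fin n) : Commute (P.x j) (P.x k) := by
  rcases eq_or_ne j k with rfl | h
  exacts [Commute.refl _, P.xx_comm j k h]

theorem commute_y (j k : Fin n) : Commute (P.y j) (P.y k) := by
  rcases eq_or_ne j k with rfl | h
  exacts [Commute.refl _, P.yy_comm j k h]

theorem qcommute_x_y_self (k : Fin n) : QCommute ρ (P.x k) (P.y k) :=
  P.xy_rel k

theorem qcommute_x_y (j k : Fin n) : QCommute (if j = k then ρ else 1) (P.x j) (P.y k) := by
  split_ifs with h
  · subst h; exact P.qcommute_x_y_self j
  · exact .of_commute (P.xy_comm j k h)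

theorem commute_x_tailProd (j : Fin n) (m : ℕ) : Commute (P.x j) (P.tailProd m) :=
  P.tailProd_induction (Q := fun _ t => Commute (P.x j) t) (fun _ _ => Commute.one_right _)
    (fun _ _ ih => (P.commute_x j _).mul_right ih) m

theorem commute_tailProd (m m' : ℕ) : Commute (P.tailProd m) (P.tailProd m') :=
  P.tailProd_induction (Q := fun _ t => Commute t (P.tailProd m')) (fun _ _ => Commute.one_left _)
    (fun _ _ ih => (P.commute_x_tailProd _ m').mul_left ih) m

theorem qcommute_tailProd_y (j : Fin n) (m : ℕ) :
    QCommute (if m ≤ j then ρ else 1) (P.tailProd m) (P.y j) := by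
  refine P.tailProd_induction (Q := fun m t => QCommute (if m ≤ j then ρ else 1) t (P.y j))
    (fun m hm => ?_) (fun m hm ih => ?_) m
  · rw [if_neg (by omega)]
    exact .of_commute (Commute.one_left _)
  · have hscalar :
        (if (⟨m, hm⟩ : Fin n) = j then ρ else 1) * (if m + 1 ≤ j then ρ else 1) =
          if m ≤ j then ρ else 1 := by
      split_ifs <;> simp_all [Fin.ext_iff] <;> omega
    exact hscalar ▸ (P.qcommute_x_y _ j).mul_left ih

theorem commute_y_tailProd {j : Fin n} {m : ℕ} (hjm : (j : ℕ) < m) :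
    Commute (P.y j) (P.tailProd m) := by
  have h := P.qcommute_tailProd_y j m
  rw [if_neg (by omega)] at h
  exact h.commute.symm

theorem x_ne_zero (hd : d ≠ 0) (k : Fin n) : P.x k ≠ 0 := fun h => P.α_ne_zero k <|
  (map_eq_zero_iff _ (algebraMap F A).injective).1 (by rw [← P.x_pow k, h, zero_pow hd])

theorem y_ne_zero (hd : d ≠ 0) (k : Fin n) : P.y k ≠ 0 := fun h => P.β_ne_zero k <|
  (map_eq_zero_iff _ (algebraMap F A).injective).1 (by rw [← P.y_pow k, h, zero_pow hd])

theorem tailProd_ne_zero (hd : d ≠ 0) (m : ℕ) : P.tailProd m ≠ 0 :=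
  P.tailProd_induction (Q := fun _ t => t ≠ 0) (fun _ _ => one_ne_zero)
    (fun _ _ ih => mul_ne_zero (P.x_ne_zero hd _) ih) m

theorem x_pow_mem_bot (k : Fin n) : P.x k ^ d ∈ (⊥ : Subalgebra F A) :=
  P.x_pow k ▸ Subalgebra.algebraMap_mem _ _

theorem tailProd_pow_mem_bot (m : ℕ) : P.tailProd m ^ d ∈ (⊥ : Subalgebra F A) :=
  P.tailProd_induction (Q := fun _ t => t ^ d ∈ (⊥ : Subalgebra F A))
    (fun _ _ => by rw [one_pow]; exact Subalgebra.one_mem _)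
    (fun _ _ ih => by
      rw [(P.commute_x_tailProd _ _).mul_pow]
      exact mul_mem (P.x_pow_mem_bot _) ih) m

noncomputable def kummerElt (k : Fin n) (p : F[X]) : A :=
  aeval (P.x k) p * P.y k * P.tailProd (k + 1)

theorem kummerElt_pow_mem_bot (hρ : IsPrimitiveRoot ρ d) (hd : d ≠ 0) (k : Fin n) (p : F[X]) :
    P.kummerElt k p ^ d ∈ (⊥ : Subalgebra F A) := by
  have hyx : QCommute ρ⁻¹ (P.y k) (P.x k) := (P.qcommute_x_y_self k).inv (hρ.ne_zero hd)
  have hcomm : Commute (aeval (P.x k) p * P.y k) (P.tailProd (k + 1)) :=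
    ((P.commute_x_tailProd k _).symm.aeval_right p).symm.mul_left
      (P.commute_y_tailProd (by omega))
  rw [kummerElt, hcomm.mul_pow]
  exact mul_mem (hyx.aeval_mul_pow_mem hρ.inv (P.x_pow_mem_bot k)
    (P.y_pow k ▸ Subalgebra.algebraMap_mem _ _) p) (P.tailProd_pow_mem_bot _)

theorem qcommute_tailProd_kummerElt {m : ℕ} {k : Fin n} (hmk : m ≤ k) (p : F[X]) :
    QCommute ρ (P.tailProd m) (P.kummerElt k p) := by
  have hy := P.qcommute_tailProd_y k m
  rw [if_pos hmk] at hy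
  have hx : Commute (P.tailProd m) (aeval (P.x k) p) :=
    (P.commute_x_tailProd k m).symm.aeval_right p
  simpa [kummerElt] using ((QCommute.of_commute hx).mul_right hy).mul_right
    (.of_commute (P.commute_tailProd m (k + 1)))

theorem qcommute_kummerElt {l k : Fin n} (hlk : l < k) (p q : F[X]) :
    QCommute ρ (P.kummerElt l p) (P.kummerElt k q) := by
  have hne : l ≠ k := hlk.ne
  have hx : Commute (P.x l) (P.kummerElt k q) :=
    (((P.commute_x l k).aeval_right q).mul_right (P.xy_comm l k hne)).mul_right
      (P.commute_x_tailProd l _)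
  have hy : Commute (P.y l) (P.kummerElt k q) :=
    (((P.xy_comm k l hne.symm).symm.aeval_right q).mul_right (P.commute_y l k)).mul_right
      (P.commute_y_tailProd (by omega))
  simpa [kummerElt] using (QCommute.of_commute ((hx.symm.aeval_right p).symm.mul_left hy)).mul_left
    (P.qcommute_tailProd_kummerElt (m := l + 1) (by omega) q)

theorem pow_mem_bot_smul_tailProd_add_sum_kummerElt (hρ : IsPrimitiveRoot ρ d) (hd : 0 < d)
    (c : F) (p : Fin n → F[X]) :
    (c • P.tailProd 0 + ∑ k, P.kummerElt k (p k)) ^ d ∈ (⊥ : Subalgebra F A) := by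
  set l := c • P.tailProd 0 :: (List.finRange n).map fun k => P.kummerElt k (p k)
  have hl : l.Pairwise (QCommute ρ) := List.pairwise_cons.2
    ⟨by simpa using fun k => (P.qcommute_tailProd_kummerElt (Nat.zero_le _) (p k)).smul_left c,
      List.pairwise_map.2 ((List.pairwise_lt_finRange n).imp (P.qcommute_kummerElt · _ _))⟩
  have hsum : l.sum = c • P.tailProd 0 + ∑ k, P.kummerElt k (p k) := by
    simp [l, Fin.sum_univ_def]
  rw [← hsum, QCommute.list_sum_pow hρ hd hl]
  refine Subalgebra.list_sum_mem _ fun z hz => ?_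
  simp only [l, List.map_cons, List.map_map, List.mem_cons, List.mem_map] at hz
  rcases hz with rfl | ⟨k, -, rfl⟩
  · rw [_root_.smul_pow]
    exact Subalgebra.smul_mem _ (P.tailProd_pow_mem_bot 0) _
  · exact P.kummerElt_pow_mem_bot hρ hd.ne' k (p k)

def kummerBasis : Option (Fin n × Fin d) → A
  | none => P.tailProd 0
  | some (k, a) => P.x k ^ (a : ℕ) * P.y k * P.tailProd (k + 1)

theorem range_kummerBasis : Set.range P.kummerBasis =
    insert ((List.finRange n).map P.x).prod {z | ∃ (k : Fin n) (a : Fin d),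
      z = P.x k ^ (a : ℕ) * P.y k * (((List.finRange n).map P.x).drop ((k : ℕ) + 1)).prod} := by
  ext z
  simp [kummerBasis, tailProd, Option.exists, eq_comm]

theorem pow_mem_bot_of_mem_span_kummerBasis (hρ : IsPrimitiveRoot ρ d) (hd : 0 < d) {u : A}
    (hu : u ∈ Submodule.span F (Set.range P.kummerBasis)) : u ^ d ∈ (⊥ : Subalgebra F A) := by
  obtain ⟨c, rfl⟩ := (Submodule.mem_span_range_iff_exists_fun F).1 hu
  have hsum : ∑ o, c o • P.kummerBasis o = c none • P.tailProd 0 +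
      ∑ k, P.kummerElt k (∑ a : Fin d, C (c (some (k, a))) * X ^ (a : ℕ)) := by
    rw [Fintype.sum_option, Fintype.sum_prod_type]
    simp [kummerBasis, kummerElt, map_sum, Finset.sum_mul, Algebra.smul_def, mul_assoc]
  rw [hsum]
  exact P.pow_mem_bot_smul_tailProd_add_sum_kummerElt hρ hd _ _

theorem kummerBasis_ne_zero (hd : d ≠ 0) : ∀ o, P.kummerBasis o ≠ 0
  | none => P.tailProd_ne_zero hd 0
  | some (k, _) => mul_ne_zero (mul_ne_zero (pow_ne_zero _ (P.x_ne_zero hd k))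
      (P.y_ne_zero hd k)) (P.tailProd_ne_zero hd _)

theorem qcommute_x_kummerBasis (j : Fin n) : ∀ o,
    QCommute (o.elim 1 fun p => if j = p.1 then ρ else 1) (P.x j) (P.kummerBasis o)
  | none => .of_commute (P.commute_x_tailProd j 0)
  | some (k, a) => by
    simpa [kummerBasis] using (((QCommute.of_commute (P.commute_x j k)).pow_right a).mul_right
      (P.qcommute_x_y j k)).mul_right (.of_commute (P.commute_x_tailProd j (k + 1)))

theorem qcommute_kummerBasis_y (j : Fin n) : ∀ o,
    QCommute (o.elim ρ fun p => (if p.1 = j then ρ else 1) ^ (p.2 : ℕ) *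
      if (p.1 : ℕ) + 1 ≤ j then ρ else 1) (P.kummerBasis o) (P.y j)
  | none => by simpa [kummerBasis] using P.qcommute_tailProd_y j 0
  | some (k, a) => by
    simpa [kummerBasis] using (((P.qcommute_x_y k j).pow_left a).mul_left
      (.of_commute (P.commute_y k j))).mul_left (P.qcommute_tailProd_y j (k + 1))

theorem linearIndependent_kummerBasis (hρ : IsPrimitiveRoot ρ d) (hd : 2 ≤ d) :
    LinearIndependent F P.kummerBasis := by
  have hd0 : d ≠ 0 := by omega
  have hρ1 : ρ ≠ 1 := hρ.ne_one (by omega)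
  refine linearIndependent_of_separating_eigenvalues _ (P.kummerBasis_ne_zero hd0) ?_
  have eigX := fun k o =>
    (P.qcommute_x_kummerBasis k o).mulLeftRight_apply_inv (P.x_ne_zero hd0 k)
  have eigY := fun k o =>
    (P.qcommute_kummerBasis_y k o).inv_mulLeftRight_apply (P.y_ne_zero hd0 k)
  rintro (_ | ⟨k, a⟩) (_ | ⟨k', a'⟩) hne
  · exact absurd rfl hne
  · exact ⟨_, _, eigX k', by simpa using hρ1.symm⟩
  · exact ⟨_, _, eigX k, by simpa using hρ1⟩
  · rcases eq_or_ne k k' with rfl | hk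
    · have haa : a ≠ a' := fun h => hne (by rw [h])
      exact ⟨_, _, eigY k, by simpa using fun h => haa (Fin.ext (hρ.pow_inj a.isLt a'.isLt h))⟩
    · exact ⟨_, _, eigX k, by simpa [hk] using hρ1⟩

end TensorCyclicPresD

theorem statement17_general {F A : Type*} [Field F] [DivisionRing A] [Algebra F A]
    (d : ℕ) (hd : 2 ≤ d) (ρ : F) (hρ : IsPrimitiveRoot ρ d
    ) (n : ℕ)
    (P : TensorCyclicPresD F A ρ d n) :
    (∀ u ∈ Submodule.span F
        (insert (((List.finRange n).map P.x).prod)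
          {z : A | ∃ (k : Fin n) (a : Fin d),
            z = P.x k ^ (a : ℕ) * P.y k *
              (((List.finRange n).map P.x).drop ((k : ℕ) + 1)).prod}),
      u ^ d ∈ Set.range (algebraMap F A)) ∧
    Module.finrank F (Submodule.span F
        (insert (((List.finRange n).map P.x).prod)
          {z : A | ∃ (k : Fin n) (a : Fin d),
            z = P.x k ^ (a : ℕ) * P.y k *
              (((List.finRange n).map P.x).drop ((k : ℕ) + 1)).prod})) = d * n + 1 := by
  rw [← P.range_kummerBasis]
  refine ⟨fun u hu => Algebra.mem_bot.1 (P.pow_mem_bot_of_mem_span_kummerBasis hρ (by omega) hu),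
    ?_⟩
  rw [finrank_span_eq_card (P.linearIndependent_kummerBasis hρ hd)]
  simp [mul_comm]

/-- The `F`-span of the `dn + 1` elements `∏_{j=1}^n x_j` together with
`x_k^a · y_k · ∏_{j=k+1}^n x_j` (for `1 ≤ k ≤ n`, `0 ≤ a ≤ d-1`) is a Kummer space of
degree `d` of dimension exactly `dn + 1`. -/
theorem statement17 {F A : Type*} [Field F] [CharZero F] [DivisionRing A] [Algebra F A]
    (d : ℕ) (hd : 2 ≤ d) (ρ : F) (hρ : IsPrimitiveRoot ρ d
    ) (n : ℕ) (hn : 1 ≤ n)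
    (P : TensorCyclicPresD F A ρ d n) (hdim : Module.finrank F A = d ^ (2 * n)) :
    (∀ u ∈ Submodule.span F
        (insert (((List.finRange n).map P.x).prod)
          {z : A | ∃ (k : Fin n) (a : Fin d),
            z = P.x k ^ (a : ℕ) * P.y k *
              (((List.finRange n).map P.x).drop ((k : ℕ) + 1)).prod}),
      u ^ d ∈ Set.range (algebraMap F A)) ∧
    Module.finrank F (Submodule.span F
        (insert (((List.finRange n).map P.x).prod)
          {z : A | ∃ (k : Fin n) (a : Fin d),
            z = P.x k ^ (a : ℕ) * P.y k *
              (((List.finRange n).map P.x).drop ((k : ℕ) + 1)).prod})) = d * n + 1 :=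
  statement17_general d hd ρ hρ n P
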